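/- arXiv:2512.16911 — 5 statements merged into one kernel-verified Lean document; each statement's English description precedes it below -/
import Mathlib

section
/- Fix a real number ε ∈ (0, 1/8] and a positive integer T with T ≤ 1/(20ε). Let β be the probability mass function on the three-element action set {a₁, a₂, a₃} given by β(a₁) = 1 − 4ε, β(a₂) = 2ε, β(a₃) = 2ε, and let r¹, r² : {a₁,a₂,a₃} → ℝ be the reward functions r¹(a₁)=0, r¹(a₂)=1, r¹(a₃)=0 and r²(a₁)=0, r²(a₂)=0, r²(a₃)=1. Draw X₁, …, X_T i.i.d. from β. Then with probability at least 1/2, every draw X_t equals a₁, and moreover on this event every probability mass function π on {a₁,a₂,a₃} satisfying π(a) = 0 for every action a not appearing among X₁, …, X_T fulfills J_i(β) − ε > J_i(π) simultaneously for i = 1 and i = 2. -/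
open MeasureTheory
open scoped ENNReal

/-!
With probability `(1 - 4ε)^T ≥ 1 - 4εT ≥ 4/5` (Bernoulli) every draw is `a₁`. A policy supported
on the observed actions is then supported on `a₁`, where both rewards vanish, so its value is `0`,
whereas `J_i(β) = 2ε` for `i = 1, 2`.
-/

noncomputable def PMF.value {α : Type*} [Fintype α] (π : PMF α) (r : α → ℝ) : ℝ :=
  ∑ a, (π a).toReal * r a

theorem PMF.value_eq_zero_of_forall_ne_zero {α : Type*} [Fintype α] {π : PMF α} {r : α → ℝ}
    (h : ∀ a, π a ≠ 0 → r a = 0) : π.value r = 0 :=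
  Finset.sum_eq_zero fun a _ => by
    by_cases ha : π a = 0
    · simp [ha]
    · simp [h a ha]

theorem PMF.pi_toMeasure_pi_singleton {ι α : Type*} [Fintype ι] [MeasurableSpace α]
    [MeasurableSingletonClass α] (p : PMF α) (a : α) :
    Measure.pi (fun _ : ι => p.toMeasure) (Set.univ.pi fun _ => {a}) = p a ^ Fintype.card ι := by
  rw [Measure.pi_pi, PMF.toMeasure_apply_singleton _ _ (measurableSet_singleton a),
    Finset.prod_const, Finset.card_univ]

theorem le_one_sub_pow_of_mul_le {δ c : ℝ} {n : ℕ} (hδ : δ ≤ 2) (h : n * δ ≤ 1 - c) :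
    c ≤ (1 - δ) ^ n := by
  have := one_add_mul_le_pow (a := -δ) (by linarith) n
  rw [← sub_eq_add_neg] at this
  linarith

theorem stmt0_general (ε : ℝ) (hε : ε ∈ Set.Ioc (0 : ℝ) (1/8)) (T : ℕ)
    (hTε : (T : ℝ) ≤ 1 / (20 * ε))
    (β : PMF (Fin 3))
    (hβ0 : β 0 = ENNReal.ofReal (1 - 4 * ε))
    (hβ1 : β 1 = ENNReal.ofReal (2 * ε))
    (hβ2 : β 2 = ENNReal.ofReal (2 * ε))
    (r : Fin 2 → Fin 3 → ℝ)
    (hr1 : r 0 = ![0, 1, 0]) (hr2 : r 1 = ![0, 0, 1]) :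
    (1 : ℝ≥0∞) / 2 ≤
      Measure.pi (fun _ : Fin T => β.toMeasure)
        {x : Fin T → Fin 3 |
          (∀ t, x t = 0) ∧
          ∀ π : PMF (Fin 3), (∀ a : Fin 3, (∀ t, x t ≠ a) → π a = 0) →
            ∀ i : Fin 2, ∑ a : Fin 3, (π a).toReal * r i a
              < (∑ a : Fin 3, (β a).toReal * r i a) - ε} := by
  obtain ⟨hε0, hε8⟩ := hε
  have hβ_value : ∀ i, β.value (r i) = 2 * ε := by
    intro i
    fin_cases i <;> simp [PMF.value, Fin.sum_univ_three, hr1, hr2, hβ1, hβ2, hε0.le]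
  have hr_zero : ∀ i, r i 0 = 0 := by
    intro i
    fin_cases i <;> simp [hr1, hr2]
  have hTε' : (T : ℝ) * (4 * ε) ≤ 1 - 1 / 2 := by
    rw [le_div_iff₀ (by linarith)] at hTε
    linarith
  calc (1 : ℝ≥0∞) / 2 = ENNReal.ofReal (1 / 2) := by
        rw [ENNReal.ofReal_div_of_pos two_pos, ENNReal.ofReal_one, ENNReal.ofReal_ofNat]
    _ ≤ ENNReal.ofReal ((1 - 4 * ε) ^ T) :=
        ENNReal.ofReal_le_ofReal (le_one_sub_pow_of_mul_le (by linarith) hTε')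
    _ = Measure.pi (fun _ : Fin T => β.toMeasure) (Set.univ.pi fun _ => {0}) := by
        rw [PMF.pi_toMeasure_pi_singleton, hβ0, ENNReal.ofReal_pow (by linarith),
          Fintype.card_fin]
    _ ≤ _ := by
        refine measure_mono fun x hx => ?_
        have hx0 : ∀ t, x t = 0 := fun t => hx t (Set.mem_univ t)
        refine ⟨hx0, fun π hπ i => ?_⟩
        have hπ_value : π.value (r i) = 0 :=
          PMF.value_eq_zero_of_forall_ne_zero fun a ha => by
            obtain ⟨t, rfl⟩ : ∃ t, x t = a := by simpa using mt (hπ a) ha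
            rw [hx0 t, hr_zero]
        change π.value (r i) < β.value (r i) - ε
        linarith [hβ_value i]

/-- First part of Proposition 4.2: on the three-armed bandit with demonstrator
`β = (1-4ε, 2ε, 2ε)` and rewards `r¹ = (0,1,0)`, `r² = (0,0,1)`, if `T ≤ 1/(20ε)` then with
probability at least `1/2` over a dataset of `T` i.i.d. draws from `β`, every draw equals `a₁`,
and every policy `π` supported on the observed actions satisfies `J_i(π) < J_i(β) - ε` for
both rewards `i = 1, 2`. -/
theorem stmt0 (ε : ℝ) (hε : ε ∈ Set.Ioc (0 : ℝ) (1/8)) (T : ℕ) (hT : 0 < T)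
    (hTε : (T : ℝ) ≤ 1 / (20 * ε))
    (β : PMF (Fin 3))
    (hβ0 : β 0 = ENNReal.ofReal (1 - 4 * ε))
    (hβ1 : β 1 = ENNReal.ofReal (2 * ε))
    (hβ2 : β 2 = ENNReal.ofReal (2 * ε))
    (r : Fin 2 → Fin 3 → ℝ)
    (hr1 : r 0 = ![0, 1, 0]) (hr2 : r 1 = ![0, 0, 1]) :
    (1 : ℝ≥0∞) / 2 ≤
      Measure.pi (fun _ : Fin T => β.toMeasure)
        {x : Fin T → Fin 3 |
          (∀ t, x t = 0) ∧
          ∀ π : PMF (Fin 3), (∀ a : Fin 3, (∀ t, x t ≠ a) → π a = 0) →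
            ∀ i : Fin 2, ∑ a : Fin 3, (π a).toReal * r i a
              < (∑ a : Fin 3, (β a).toReal * r i a) - ε} :=
  stmt0_general ε hε T hTε β hβ0 hβ1 hβ2 r hr1 hr2
end

section
/- Let 𝒜 = {a₁, a₂, a₃} and let r¹, r² : 𝒜 → ℝ be the reward functions r¹(a₁)=0, r¹(a₂)=1, r¹(a₃)=0 and r²(a₁)=0, r²(a₂)=0, r²(a₃)=1. Let β̂ be any probability mass function on 𝒜 with β̂(a₂) = β̂(a₃) = 0. For i ∈ {1,2}, let Pᵢ denote the distribution of a dataset D = ((A₁, rⁱ(A₁)), …, (A_{T'}, rⁱ(A_{T'}))) of T' i.i.d. action–reward pairs with each Aₜ drawn from β̂. Then for every measurable map π̂ from datasets in (𝒜 × ℝ)^{T'} to probability mass functions on 𝒜, it holds that max_{i∈{1,2}} E_{D∼Pᵢ}[ max_π J_i(π) − J_i(π̂(D)) ] ≥ 1/2, where the inner maximum is over all probability mass functions π on 𝒜. -/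
/-! `β̂` is the point mass at `a₁`, whose reward is `0` under both instances, so under both
instances the dataset is the same constant `D₀` and `π̂` must commit to the single policy
`π̂(D₀)`. Its suboptimalities are `1 - π̂(D₀)(a₂)` and `1 - π̂(D₀)(a₃)`, which sum to
at least `1`. -/

open MeasureTheory
open scoped ENNReal

namespace PMF

variable {α : Type*}

theorem eq_pure_of_forall_ne_eq_zero {p : PMF α} {a : α} (h : ∀ b ≠ a, p b = 0) :
    p = pure a := by
  ext b
  by_cases hb : b = a
  · subst hb; simpa using (tsum_eq_single b h).symm.trans p.tsum_coe
  · simp [h b hb, hb]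

theorem toReal_apply_le_one (p : PMF α) (a : α) : (p a).toReal ≤ 1 :=
  ENNReal.toReal_le_of_le_ofReal zero_le_one (by simpa using p.coe_le_one a)

theorem toReal_apply_add_toReal_apply_le_one (p : PMF α) {a b : α} (hab : a ≠ b) :
    (p a).toReal + (p b).toReal ≤ 1 := by
  classical
  have h : p a + p b ≤ 1 := by
    calc p a + p b = ∑ c ∈ {a, b}, p c := (Finset.sum_pair hab).symm
      _ ≤ ∑' c, p c := ENNReal.sum_le_tsum _
      _ = 1 := p.tsum_coe
  rw [← ENNReal.toReal_add (p.apply_ne_top a) (p.apply_ne_top b)]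
  exact ENNReal.toReal_le_of_le_ofReal zero_le_one (by simpa using h)

theorem iSup_toReal_apply (a : α) : ⨆ p : PMF α, (p a).toReal = 1 :=
  haveI : Nonempty (PMF α) := ⟨pure a⟩
  le_antisymm (ciSup_le fun p => p.toReal_apply_le_one a) <|
    le_ciSup_of_le ⟨1, Set.forall_mem_range.2 fun p => p.toReal_apply_le_one a⟩ (pure a)
      (by simp)

end PMF

theorem MeasureTheory.Measure.pi_dirac {ι : Type*} [Fintype ι] {α : ι → Type*}
    [∀ i, MeasurableSpace (α i)] (x : ∀ i, α i) :
    Measure.pi (fun i => dirac (x i)) = dirac x := by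
  refine Measure.pi_eq fun s hs => ?_
  classical
  rw [dirac_apply' x (MeasurableSet.univ_pi hs)]
  simp only [fun i => dirac_apply' (x i) (hs i), Set.indicator_apply, Set.mem_univ_pi,
    Pi.one_apply]
  split_ifs with h
  · exact (Finset.prod_eq_one fun i _ => if_pos (h i)).symm
  · obtain ⟨i, hi⟩ := not_forall.1 h
    exact (Finset.prod_eq_zero (Finset.mem_univ i) (if_neg hi)).symm

theorem stmt1_general (T' : ℕ)
    (r : Fin 2 → Fin 3 → ℝ)
    (hr1 : r 0 = ![0, 1, 0]) (hr2 : r 1 = ![0, 0, 1])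
    (βhat : PMF (Fin 3)) (hβ1 : βhat 1 = 0) (hβ2 : βhat 2 = 0)
    (P : Fin 2 → Measure (Fin T' → Fin 3 × ℝ))
    (hP : ∀ i, P i =
      Measure.pi (fun _ : Fin T' =>
        Measure.map (fun a : Fin 3 => (a, r i a)) βhat.toMeasure))
    (πhat : (Fin T' → Fin 3 × ℝ) → PMF (Fin 3)) :
    (1 : ℝ) / 2 ≤
      max
        (∫ D, ((⨆ π : PMF (Fin 3), ∑ a : Fin 3, (π a).toReal * r 0 a) -
            ∑ a : Fin 3, (πhat D a).toReal * r 0 a) ∂(P 0))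
        (∫ D, ((⨆ π : PMF (Fin 3), ∑ a : Fin 3, (π a).toReal * r 1 a) -
            ∑ a : Fin 3, (πhat D a).toReal * r 1 a) ∂(P 1)) := by
  have hβ : βhat = PMF.pure 0 :=
    PMF.eq_pure_of_forall_ne_eq_zero fun b hb => by fin_cases b <;> simp_all
  set D₀ : Fin T' → Fin 3 × ℝ := fun _ => (0, 0)
  have hP_eq_dirac : ∀ i, P i = Measure.dirac D₀ := by
    intro i
    have hri : r i 0 = 0 := by fin_cases i <;> simp [hr1, hr2]
    rw [hP, hβ, PMF.toMeasure_pure, Measure.map_dirac' (by fun_prop), Measure.pi_dirac, hri]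
  have hJ₀ : ∀ π : PMF (Fin 3), ∑ a, (π a).toReal * r 0 a = (π 1).toReal := by
    simp [hr1, Fin.sum_univ_three]
  have hJ₁ : ∀ π : PMF (Fin 3), ∑ a, (π a).toReal * r 1 a = (π 2).toReal := by
    simp [hr2, Fin.sum_univ_three]
  simp only [hP_eq_dirac, integral_dirac, hJ₀, hJ₁, PMF.iSup_toReal_apply]
  have hmass := (πhat D₀).toReal_apply_add_toReal_apply_le_one (a := 1) (b := 2) (by decide)
  rw [le_max_iff]
  by_contra! h
  linarith [h.1, h.2]

/-- Second part of Proposition 4.2: with rewards `r¹ = (0,1,0)`, `r² = (0,0,1)` on three arms,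
and `β̂` a policy with `β̂(a₂) = β̂(a₃) = 0`, for any measurable estimator `π̂` mapping datasets
of `T'` i.i.d. action–reward pairs `(Aₜ, rⁱ(Aₜ))`, `Aₜ ∼ β̂`, to policies, the worst case (over
`i ∈ {1,2}`) expected suboptimality `E[max_π J_i(π) − J_i(π̂(D))]` is at least `1/2`. -/
theorem stmt1 (T' : ℕ) (hT' : 0 < T')
    (r : Fin 2 → Fin 3 → ℝ)
    (hr1 : r 0 = ![0, 1, 0]) (hr2 : r 1 = ![0, 0, 1])
    (βhat : PMF (Fin 3)) (hβ1 : βhat 1 = 0) (hβ2 : βhat 2 = 0)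
    (P : Fin 2 → Measure (Fin T' → Fin 3 × ℝ))
    (hP : ∀ i, P i =
      Measure.pi (fun _ : Fin T' =>
        Measure.map (fun a : Fin 3 => (a, r i a)) βhat.toMeasure))
    (πhat : (Fin T' → Fin 3 × ℝ) → PMF (Fin 3))
    (hπhat : ∀ a : Fin 3, Measurable fun D => πhat D a) :
    (1 : ℝ) / 2 ≤
      max
        (∫ D, ((⨆ π : PMF (Fin 3), ∑ a : Fin 3, (π a).toReal * r 0 a) -
            ∑ a : Fin 3, (πhat D a).toReal * r 0 a) ∂(P 0))
        (∫ D, ((⨆ π : PMF (Fin 3), ∑ a : Fin 3, (π a).toReal * r 1 a) -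
            ∑ a : Fin 3, (πhat D a).toReal * r 1 a) ∂(P 1)) :=
  stmt1_general T' r hr1 hr2 βhat hβ1 hβ2 P hP πhat
end

section
/- Fix an integer A ≥ 2, an integer T ≥ 1, and α ∈ [0,1]. On the action set {a₁, …, a_A}, define the demonstrator policies β¹ as the point mass at a₁ and, for each 2 ≤ i ≤ A, βⁱ(a₁) = 1 − α, βⁱ(a_i) = α, βⁱ(a) = 0 otherwise. Then for every pair of distinct indices i ≠ j in {1, …, A} and every measurable set E of datasets in {a₁,…,a_A}^T, it holds that P_{(βⁱ)^{⊗T}}(E) ≤ 2·P_{(βʲ)^{⊗T}}(E) + T·α, where (βⁱ)^{⊗T} denotes the T-fold product of βⁱ. -/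
open MeasureTheory
open scoped ENNReal

/-!
Every demonstrator puts mass at least `1 - α` on `a₁`, so by a union bound each product
measure `(βᵏ)^⊗T` gives mass at most `T·α` to the datasets other than the constant one
`(a₁, …, a₁)`. Two probability measures that are both `ε`-concentrated on a common point
`x` satisfy `μ E ≤ ν E + ε`: if `x ∉ E` then `μ E ≤ μ {x}ᶜ ≤ ε`, and if `x ∈ E` then
`ν E + ε ≥ ν {x} + ν {x}ᶜ ≥ 1`.
-/

theorem MeasureTheory.Measure.pi_compl_singleton_le_sum {ι : Type*} [Fintype ι]
    {X : ι → Type*} [∀ i, MeasurableSpace (X i)] [∀ i, MeasurableSingletonClass (X i)]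
    (μ : ∀ i, Measure (X i)) [∀ i, IsProbabilityMeasure (μ i)] (x : ∀ i, X i) :
    Measure.pi μ {x}ᶜ ≤ ∑ i, μ i {x i}ᶜ := by
  have hcover : ({x}ᶜ : Set (∀ i, X i)) ⊆ ⋃ i, Function.eval i ⁻¹' {x i}ᶜ := by
    intro y hy
    contrapose! hy
    simp_all [funext_iff]
  calc Measure.pi μ {x}ᶜ ≤ ∑ i, Measure.pi μ (Function.eval i ⁻¹' {x i}ᶜ) :=
        (measure_mono hcover).trans (measure_iUnion_fintype_le _ _)
    _ = ∑ i, μ i {x i}ᶜ := by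
        congr! 1 with i
        exact (measurePreserving_eval μ i).measure_preimage
          (measurableSet_singleton _).compl.nullMeasurableSet

theorem MeasureTheory.measure_le_add_of_compl_singleton_le {Ω : Type*} [MeasurableSpace Ω]
    {μ ν : Measure Ω} [IsProbabilityMeasure μ] [IsProbabilityMeasure ν] {x : Ω} {ε : ℝ≥0∞}
    (hμ : μ {x}ᶜ ≤ ε) (hν : ν {x}ᶜ ≤ ε) (E : Set Ω) :
    μ E ≤ ν E + ε := by
  by_cases hx : x ∈ E
  · calc μ E ≤ 1 := prob_le_one
      _ = ν ({x} ∪ {x}ᶜ) := by simp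
      _ ≤ ν {x} + ν {x}ᶜ := measure_union_le _ _
      _ ≤ ν E + ε := add_le_add (measure_mono (by simpa using hx)) hν
  · calc μ E ≤ μ {x}ᶜ := measure_mono (by simpa using hx)
      _ ≤ ν E + ε := hμ.trans le_add_self

theorem PMF.toMeasure_compl_singleton {X : Type*} [MeasurableSpace X]
    [MeasurableSingletonClass X] (p : PMF X) (x : X) :
    p.toMeasure {x}ᶜ = 1 - p x := by
  rw [prob_compl_eq_one_sub (measurableSet_singleton x),
    p.toMeasure_apply_singleton x (measurableSet_singleton x)]

/-- Lemma B.1 of the paper: with demonstrators `β¹ = δ_{a₁}` and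
`βⁱ = (1-α)·δ_{a₁} + α·δ_{a_i}` for `i ≥ 2` on `A` arms, for any distinct `i ≠ j` and any
measurable set `E` of datasets of `T` i.i.d. draws,
`P_{(βⁱ)^⊗T}(E) ≤ 2·P_{(βʲ)^⊗T}(E) + T·α`. -/
theorem stmt5 (A : ℕ) (T : ℕ) (α : ℝ) (a₁ : Fin A)
    (β : Fin A → PMF (Fin A))
    (hβ0 : ∀ a, β a₁ a = if a = a₁ then 1 else 0)
    (hβi : ∀ i : Fin A, i ≠ a₁ → ∀ a, β i a =
      if a = a₁ then ENNReal.ofReal (1 - α) else if a = i then ENNReal.ofReal α else 0)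
    (i j : Fin A) (E : Set (Fin T → Fin A)) :
    (Measure.pi fun _ : Fin T => (β i).toMeasure) E ≤
      2 * (Measure.pi fun _ : Fin T => (β j).toMeasure) E + T * ENNReal.ofReal α := by
  have hβ : ∀ k, (β k).toMeasure {a₁}ᶜ ≤ ENNReal.ofReal α := by
    intro k
    rw [PMF.toMeasure_compl_singleton]
    by_cases hk : k = a₁
    · simp [hk, hβ0]
    · rw [hβi k hk, if_pos rfl, tsub_le_iff_right]
      calc (1 : ℝ≥0∞) = ENNReal.ofReal (α + (1 - α)) := by simp
        _ ≤ ENNReal.ofReal α + ENNReal.ofReal (1 - α) := ENNReal.ofReal_add_le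
  have hpi : ∀ k, (Measure.pi fun _ : Fin T => (β k).toMeasure) {fun _ => a₁}ᶜ
      ≤ T * ENNReal.ofReal α := fun k =>
    calc _ ≤ ∑ _t : Fin T, (β k).toMeasure {a₁}ᶜ := Measure.pi_compl_singleton_le_sum _ _
      _ ≤ ∑ _t : Fin T, ENNReal.ofReal α := Finset.sum_le_sum fun _ _ => hβ k
      _ = T * ENNReal.ofReal α := by simp
  calc _ ≤ (Measure.pi fun _ : Fin T => (β j).toMeasure) E + T * ENNReal.ofReal α :=
        measure_le_add_of_compl_singleton_le (hpi i) (hpi j) E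
    _ ≤ _ := by gcongr; exact le_mul_of_one_le_left' one_le_two
end

section
/- Let S be a nonempty finite set, p a probability mass function on S, T a positive integer, and X₁, …, X_T i.i.d. draws from p. For s ∈ S let N(s) = #{t ∈ {1,…,T} : Xₜ = s}. Let δ ∈ (0,1) and let λ ≥ 4·log(|S|/δ). Then with probability at least 1 − δ, simultaneously for all s ∈ S: N(s) + λ ≥ (1/2)·(p(s)·T + λ). -/
/-!
Each count `N(s)` is a sum of independent indicators, so its moment generating function at
`-log 2` is `(1 - p(s)/2)^T ≤ exp(-p(s)T/2)`, and the Chernoff bound gives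
`P(N(s) ≤ m) ≤ 2^m exp(-p(s)T/2)`. At `m = (p(s)T - λ)/2` the exponent is
`(p(s)T (log 2 - 1) - λ log 2)/2 ≤ -λ/4`, because `1/2 ≤ log 2 ≤ 1`. A union bound over `S`
then costs `|S| exp(-λ/4) ≤ δ`.
-/

open MeasureTheory ProbabilityTheory Real Finset

lemma PMF.sum_toReal {S : Type*} [Fintype S] (p : PMF S) : ∑ y, (p y).toReal = 1 := by
  rw [← ENNReal.toReal_sum fun y _ => p.apply_ne_top y, ← tsum_fintype (L := .unconditional S),
    p.tsum_coe, ENNReal.toReal_one]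

section Counts

variable {S : Type*} [Fintype S] [DecidableEq S] [MeasurableSpace S] [MeasurableSingletonClass S]

lemma PMF.mgf_indicator_eq (p : PMF S) (s : S) (θ : ℝ) :
    mgf (fun y => if y = s then (1 : ℝ) else 0) p.toMeasure θ
      = 1 + (p s).toReal * (exp θ - 1) := by
  have hterm : ∀ y, (p y).toReal * exp (θ * if y = s then 1 else 0)
      = (p y).toReal + if y = s then (p s).toReal * (exp θ - 1) else 0 := by
    intro y
    split_ifs with h
    · subst h; simp only [mul_one]; ring
    · simp
  simp only [mgf, PMF.integral_eq_sum, smul_eq_mul, hterm, sum_add_distrib, p.sum_toReal,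
    sum_ite_eq', mem_univ, if_true]

variable {ι : Type*} [Fintype ι]

lemma mgf_pi_card_filter_eq (p : PMF S) (s : S) (θ : ℝ) :
    mgf (fun x : ι → S => (#{i | x i = s} : ℝ)) (Measure.pi fun _ => p.toMeasure) θ
      = (1 + (p s).toReal * (exp θ - 1)) ^ Fintype.card ι := by
  have hsum : (fun x : ι → S => (#{i | x i = s} : ℝ))
      = ∑ i, fun x : ι → S => if x i = s then (1 : ℝ) else 0 := by
    ext x
    simp only [natCast_card_filter, Finset.sum_apply]
  have hindep : iIndepFun (fun i (x : ι → S) => if x i = s then (1 : ℝ) else 0)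
      (Measure.pi fun _ => p.toMeasure) :=
    iIndepFun_pi (X := fun _ y => if y = s then (1 : ℝ) else 0) fun _ => by fun_prop
  rw [hsum, hindep.mgf_sum (fun _ => by fun_prop), ← p.mgf_indicator_eq s θ, ← card_univ,
    ← prod_const]
  refine prod_congr rfl fun i _ => ?_
  have hmap := mgf_map (μ := Measure.pi fun _ : ι => p.toMeasure) (Y := Function.eval i)
    (X := fun y => if y = s then (1 : ℝ) else 0) (t := θ) (measurable_pi_apply i).aemeasurable
    (by fun_prop)
  rw [(measurePreserving_eval (fun _ : ι => p.toMeasure) i).map_eq] at hmap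
  exact hmap.symm

lemma measureReal_pi_card_filter_le_le (p : PMF S) (s : S) (m : ℝ) :
    (Measure.pi fun _ : ι => p.toMeasure).real {x | (#{i | x i = s} : ℝ) ≤ m}
      ≤ exp (m * log 2 - (p s).toReal * Fintype.card ι / 2) := by
  have hq : (p s).toReal ≤ 1 :=
    ENNReal.toReal_le_of_le_ofReal zero_le_one (by simpa using p.coe_le_one s)
  calc _ ≤ exp (-(-log 2) * m) * mgf (fun x : ι → S => (#{i | x i = s} : ℝ))
          (Measure.pi fun _ => p.toMeasure) (-log 2) :=
        measure_le_le_exp_mul_mgf m (by linarith [log_nonneg one_le_two]) (Integrable.of_finite)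
    _ = exp (m * log 2) * (1 - (p s).toReal / 2) ^ Fintype.card ι := by
        rw [mgf_pi_card_filter_eq, exp_neg, exp_log two_pos]
        ring_nf
    _ ≤ exp (m * log 2) * exp (-((p s).toReal / 2)) ^ Fintype.card ι := by
        gcongr
        · linarith
        · linarith [add_one_le_exp (-((p s).toReal / 2))]
    _ = exp (m * log 2 - (p s).toReal * Fintype.card ι / 2) := by
        rw [← exp_nat_mul, ← exp_add]
        ring_nf

lemma measureReal_pi_card_filter_add_lt_half_le (p : PMF S) (s : S) {lam : ℝ}
    (hlam : 0 ≤ lam) :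
    (Measure.pi fun _ : ι => p.toMeasure).real
        {x | (#{i | x i = s} : ℝ) + lam < 1 / 2 * ((p s).toReal * Fintype.card ι + lam)}
      ≤ exp (-(lam / 4)) := by
  set a := (p s).toReal * Fintype.card ι
  have ha : 0 ≤ a := by positivity
  calc _ ≤ (Measure.pi fun _ : ι => p.toMeasure).real
          {x | (#{i | x i = s} : ℝ) ≤ (a - lam) / 2} :=
        measureReal_mono <| Set.ofPred_subset_ofPred.mpr fun x hx => by linarith
    _ ≤ exp ((a - lam) / 2 * log 2 - a / 2) := measureReal_pi_card_filter_le_le p s _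
    _ ≤ exp (-(lam / 4)) := by
        gcongr
        nlinarith [log_two_gt_d9, log_two_lt_d9]

end Counts

lemma one_sub_card_mul_le_measureReal_forall {Ω ι : Type*} [MeasurableSpace Ω] [Fintype ι]
    {μ : Measure Ω} [IsProbabilityMeasure μ] {P : ι → Ω → Prop}
    (hP : MeasurableSet {ω | ∀ i, P i ω}) {ε : ℝ} (h : ∀ i, μ.real {ω | ¬ P i ω} ≤ ε) :
    1 - Fintype.card ι * ε ≤ μ.real {ω | ∀ i, P i ω} := by
  have hcompl : {ω | ∀ i, P i ω}ᶜ = ⋃ i, {ω | ¬ P i ω} := by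
    ext ω
    simp
  have hunion : μ.real {ω | ∀ i, P i ω}ᶜ ≤ Fintype.card ι * ε := by
    rw [hcompl]
    calc _ ≤ ∑ i, μ.real {ω | ¬ P i ω} := measureReal_iUnion_fintype_le _
      _ ≤ ∑ _i : ι, ε := sum_le_sum fun i _ => h i
      _ = Fintype.card ι * ε := by simp
  rw [probReal_compl_eq_one_sub hP] at hunion
  linarith

theorem stmt10_general {S : Type*} [Fintype S] [DecidableEq S]
    [MeasurableSpace S] [MeasurableSingletonClass S]
    (p : PMF S) (T : ℕ) (δ lam : ℝ) (hδ : δ ∈ Set.Ioo (0 : ℝ) 1)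
    (hlam : 4 * Real.log ((Fintype.card S : ℝ) / δ) ≤ lam) :
    ENNReal.ofReal (1 - δ) ≤
      Measure.pi (fun _ : Fin T => p.toMeasure)
        {x : Fin T → S | ∀ s : S,
          (1 / 2) * ((p s).toReal * T + lam) ≤
            ((Finset.univ.filter fun t => x t = s).card : ℝ) + lam} := by
  obtain ⟨hδ0, hδ1⟩ := hδ
  have hS : (1 : ℝ) ≤ Fintype.card S := by
    obtain ⟨s, -⟩ := p.support_nonempty
    exact_mod_cast Fintype.card_pos_iff.mpr ⟨s⟩
  have hlog : 0 < log (Fintype.card S / δ) := log_pos ((one_lt_div hδ0).mpr (by linarith))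
  have hfailure : Fintype.card S * exp (-(lam / 4)) ≤ δ := by
    calc _ = δ * exp (log (Fintype.card S / δ) - lam / 4) := by
          rw [exp_sub, exp_log (by positivity), exp_neg]
          field_simp
      _ ≤ δ * 1 := by gcongr; exact exp_le_one_iff.mpr (by linarith)
      _ = δ := mul_one δ
  have hbad (s : S) := measureReal_pi_card_filter_add_lt_half_le (ι := Fin T) p s
    (show 0 ≤ lam by linarith)
  simp only [← not_le, Fintype.card_fin] at hbad
  have hgood := one_sub_card_mul_le_measureReal_forall MeasurableSet.of_discrete hbad
  rw [ENNReal.ofReal_le_iff_le_toReal (measure_ne_top _ _), ← measureReal_def]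
  linarith

/-- Lemma B.3 of the paper (count concentration): for `X₁,…,X_T` i.i.d. from a pmf `p` on
a nonempty finite set `S`, with counts `N(s)`, if `λ ≥ 4·log(|S|/δ)` then with probability
at least `1 − δ`, simultaneously for all `s`: `N(s) + λ ≥ (1/2)·(p(s)·T + λ)`. -/
theorem stmt10 {S : Type*} [Fintype S] [Nonempty S] [DecidableEq S]
    [MeasurableSpace S] [MeasurableSingletonClass S]
    (p : PMF S) (T : ℕ) (hT : 0 < T) (δ lam : ℝ) (hδ : δ ∈ Set.Ioo (0 : ℝ) 1)
    (hlam : 4 * Real.log ((Fintype.card S : ℝ) / δ) ≤ lam) :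
    ENNReal.ofReal (1 - δ) ≤
      Measure.pi (fun _ : Fin T => p.toMeasure)
        {x : Fin T → S | ∀ s : S,
          (1 / 2) * ((p s).toReal * T + lam) ≤
            ((Finset.univ.filter fun t => x t = s).card : ℝ) + lam} :=
  stmt10_general p T δ lam hδ hlam
end

section
/- Let A ≥ 1 be an integer and let p be a probability mass function on an action set of size A. Let n ≥ 1 be an integer and X₁, …, X_n i.i.d. draws from p; for each action a let N(a) = #{t : Xₜ = a}. Fix α ∈ [0,1], a real λ ≥ A, and δ ∈ (0, 0.9], and define π̃(a) = (1−α)·N(a)/n + α·(N(a) + λ/A)/(n + λ). Then for each action a, with probability at least 1 − δ, π̃(a) ≥ α · min{ p(a) / (64·log(1/δ)), 1/(2λ) }. -/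
/-!
Write `N = N(a) ~ Bin(n, p(a))` and `L = log(1/δ) ≥ 1/16`. Since `π̃(a) ≥ α (N + λ/A)/(n + λ)`
and `λ/A ≥ 1`, the smoothed estimate alone is at least `1/(n + λ)`. This already beats the floor
`1/(2λ)` when `n ≤ λ`, and beats `p(a)/(64 L)` when `n p(a) < 32 L`. In the remaining regime
`λ < n`, `32 L ≤ n p(a)`, the multiplicative Chernoff bound at `θ = -log 2` gives
`P(N ≤ n p(a)/2) ≤ exp(-(1 - log 2) n p(a)/2) ≤ δ`, and on the complementary event
`(N + λ/A)/(n + λ) ≥ (n p(a)/2)/(2n) = p(a)/4 ≥ p(a)/(64 L)`.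
-/

open MeasureTheory Real ProbabilityTheory Finset

section Indicator

variable {Ω : Type*} {m : MeasurableSpace Ω} {μ : Measure Ω} [IsProbabilityMeasure μ]
  {s : Set Ω}

lemma exp_mul_indicator_one (s : Set Ω) (t : ℝ) :
    (fun ω => exp (t * s.indicator 1 ω)) = fun ω => s.indicator (fun _ => exp t - 1) ω + 1 := by
  funext ω
  by_cases hω : ω ∈ s <;> simp [hω]

lemma integrable_exp_mul_indicator_one (hs : MeasurableSet s) (t : ℝ) :
    Integrable (fun ω => exp (t * s.indicator 1 ω)) μ := by
  rw [exp_mul_indicator_one]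
  exact ((integrable_const _).indicator hs).add (integrable_const 1)

lemma mgf_indicator_one (hs : MeasurableSet s) (t : ℝ) :
    mgf (s.indicator 1) μ t = 1 + μ.real s * (exp t - 1) := by
  rw [mgf, exp_mul_indicator_one, integral_add ((integrable_const _).indicator hs)
    (integrable_const 1), integral_indicator_const _ hs]
  simp [add_comm]

end Indicator

/-- Multiplicative Chernoff bound for the lower tail of a binomial count, at `θ = -log 2`. -/
lemma measureReal_card_filter_le_half_le {ι β : Type*} [Fintype ι] [MeasurableSpace β]
    (ν : Measure β) [IsProbabilityMeasure ν] {s : Set β} [DecidablePred (· ∈ s)]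
    (hs : MeasurableSet s) :
    (Measure.pi fun _ : ι => ν).real
        {x | (#{t | x t ∈ s} : ℝ) ≤ Fintype.card ι * ν.real s / 2} ≤
      exp (-((1 - log 2) / 2) * (Fintype.card ι * ν.real s)) := by
  set μ := Measure.pi fun _ : ι => ν
  set q := ν.real s
  set X : ι → (ι → β) → ℝ := fun t => (Function.eval t ⁻¹' s).indicator 1
  have hX : ∀ t, Measurable (X t) := fun t =>
    measurable_const.indicator (measurable_pi_apply t hs)
  have h_indep : iIndepFun X μ :=
    iIndepFun_pi fun _ => (measurable_const.indicator hs).aemeasurable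
  have h_mgf : ∀ t, mgf (X t) μ (-log 2) = 1 - q / 2 := by
    intro t
    rw [mgf_indicator_one (measurable_pi_apply t hs),
      (measurePreserving_eval (fun _ : ι => ν) t).measureReal_preimage hs.nullMeasurableSet,
      exp_neg, exp_log two_pos]
    ring
  have h_int : Integrable (fun x => exp (-log 2 * (∑ t, X t) x)) μ :=
    h_indep.integrable_exp_mul_sum hX fun t _ =>
      integrable_exp_mul_indicator_one (measurable_pi_apply t hs) _
  have h_card : ∀ x : ι → β, (#{t | x t ∈ s} : ℝ) = (∑ t, X t) x := by
    intro x
    rw [Finset.sum_apply, Finset.card_filter]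
    push_cast
    refine Finset.sum_congr rfl fun t _ => ?_
    by_cases h : x t ∈ s <;> simp [X, h]
  have hq : q ≤ 1 := measureReal_le_one
  calc μ.real {x | (#{t | x t ∈ s} : ℝ) ≤ Fintype.card ι * q / 2}
      = μ.real {x | (∑ t, X t) x ≤ Fintype.card ι * q / 2} := by simp only [h_card]
    _ ≤ exp (-(-log 2) * (Fintype.card ι * q / 2)) * mgf (∑ t, X t) μ (-log 2) :=
        measure_le_le_exp_mul_mgf _ (neg_nonpos.2 (log_pos one_lt_two).le) h_int
    _ = exp (log 2 * (Fintype.card ι * q / 2)) * (1 - q / 2) ^ Fintype.card ι := by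
        rw [h_indep.mgf_sum hX, Finset.prod_congr rfl fun t _ => h_mgf t, Finset.prod_const,
          Finset.card_univ, neg_neg]
    _ ≤ exp (log 2 * (Fintype.card ι * q / 2)) * exp (-(q / 2)) ^ Fintype.card ι := by
        gcongr
        · linarith
        · linarith [add_one_le_exp (-(q / 2))]
    _ = exp (-((1 - log 2) / 2) * (Fintype.card ι * q)) := by
        rw [← exp_nat_mul, ← exp_add]
        ring_nf

lemma one_div_sixteen_le_log_one_div {δ : ℝ} (hδ0 : 0 < δ) (hδ : δ ≤ 0.9) :
    1 / 16 ≤ log (1 / δ) := by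
  have := one_sub_inv_le_log_of_pos (one_div_pos.2 hδ0)
  rw [one_div, inv_inv, ← one_div] at this
  linarith

lemma exp_neg_one_sub_log_two_div_two_mul_le {δ x : ℝ} (hδ0 : 0 < δ) (hδ1 : δ ≤ 1)
    (hx : 32 * log (1 / δ) ≤ x) :
    exp (-((1 - log 2) / 2) * x) ≤ δ := by
  have hL : 0 ≤ log (1 / δ) := log_nonneg (one_le_one_div hδ0 hδ1)
  have hlog2 := log_two_lt_d9
  calc exp (-((1 - log 2) / 2) * x) ≤ exp (-log (1 / δ)) := by
        gcongr
        nlinarith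
    _ = δ := by rw [one_div, log_inv, neg_neg, exp_log hδ0]

lemma ofReal_one_sub_le_of_measureReal_compl_le {Ω : Type*} {m : MeasurableSpace Ω}
    {μ : Measure Ω} [IsProbabilityMeasure μ] {S : Set Ω} {δ : ℝ} (hS : MeasurableSet S)
    (h : μ.real Sᶜ ≤ δ) : ENNReal.ofReal (1 - δ) ≤ μ S := by
  rw [← ofReal_measureReal (measure_ne_top μ S)]
  apply ENNReal.ofReal_le_ofReal
  rw [measureReal_compl hS, probReal_univ] at h
  linarith

/-- The paper's `π̃(a)`, as a function of the count `N = N(a)`. -/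
noncomputable def regularizedMixture (A n : ℕ) (α lam N : ℝ) : ℝ :=
  (1 - α) * N / n + α * (N + lam / A) / (n + lam)

lemma mul_le_regularizedMixture {A n : ℕ} {α lam N m : ℝ} (hα : α ∈ Set.Icc (0 : ℝ) 1)
    (hN : 0 ≤ N) (hm : m ≤ (N + lam / A) / (n + lam)) :
    α * m ≤ regularizedMixture A n α lam N := by
  have h_empirical : 0 ≤ (1 - α) * N / n :=
    div_nonneg (mul_nonneg (sub_nonneg.2 hα.2) hN) n.cast_nonneg
  have := mul_le_mul_of_nonneg_left hm hα.1
  rw [regularizedMixture, mul_div_assoc α]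
  linarith

lemma min_le_add_div_add_of_le_or_lt {n lam P L N c : ℝ} (hn : 0 ≤ n) (hlam : 0 < lam)
    (hL : 0 < L) (hN : 0 ≤ N) (hc : 1 ≤ c) (h : n ≤ lam ∨ n * P < 32 * L) :
    min (P / (64 * L)) (1 / (2 * lam)) ≤ (N + c) / (n + lam) := by
  have h_floor : 1 / (n + lam) ≤ (N + c) / (n + lam) := by gcongr; linarith
  refine le_trans ?_ h_floor
  rcases le_or_gt n lam with hnl | hnl
  · exact (min_le_right _ _).trans (by gcongr; linarith)
  · have hnP := h.resolve_left hnl.not_ge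
    refine (min_le_left _ _).trans ?_
    rw [div_le_div_iff₀ (by positivity) (by positivity)]
    nlinarith

lemma div_le_add_div_add_of_half_lt {n lam P L N c : ℝ} (hlam : 0 ≤ lam) (hn : lam < n)
    (hL : 1 / 16 ≤ L) (hP : 0 ≤ P) (hc : 0 ≤ c) (hN : n * P / 2 < N) :
    P / (64 * L) ≤ (N + c) / (n + lam) := by
  calc P / (64 * L) ≤ P / 4 := by gcongr; linarith
    _ ≤ (N + c) / (n + lam) := by
      rw [div_le_div_iff₀ (by norm_num) (by linarith)]
      nlinarith

theorem stmt11_general (A : ℕ) (hA : 1 ≤ A) (p : PMF (Fin A)) (n : ℕ)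
    (α : ℝ) (hα : α ∈ Set.Icc (0 : ℝ) 1) (lam : ℝ) (hlam : (A : ℝ) ≤ lam)
    (δ : ℝ) (hδ : δ ∈ Set.Ioc (0 : ℝ) 0.9) :
    ∀ a : Fin A,
      ENNReal.ofReal (1 - δ) ≤
        Measure.pi (fun _ : Fin n => p.toMeasure)
          {x : Fin n → Fin A |
            α * min ((p a).toReal / (64 * Real.log (1 / δ))) (1 / (2 * lam)) ≤
              (1 - α) * ((Finset.univ.filter fun t => x t = a).card : ℝ) / n +
                α * (((Finset.univ.filter fun t => x t = a).card : ℝ) + lam / A) /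
                  (n + lam)} := by
  intro a
  obtain ⟨hδ0, hδ9⟩ := hδ
  have hA0 : (0 : ℝ) < A := by exact_mod_cast hA
  have hc : 1 ≤ lam / A := (one_le_div hA0).2 hlam
  have hL := one_div_sixteen_le_log_one_div hδ0 hδ9
  have hP : p.toMeasure.real {a} = (p a).toReal := by
    rw [measureReal_def, p.toMeasure_apply_singleton a (measurableSet_singleton a)]
  refine ofReal_one_sub_le_of_measureReal_compl_le (Set.toFinite _).measurableSet ?_
  by_cases h : lam < n ∧ 32 * log (1 / δ) ≤ n * (p a).toReal
  · have key := measureReal_card_filter_le_half_le (ι := Fin n) p.toMeasure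
      (measurableSet_singleton a)
    rw [Fintype.card_fin, hP] at key
    refine le_trans (measureReal_mono fun x hx => ?_) (key.trans ?_)
    · simp only [Set.mem_compl_iff, Set.mem_ofPred_eq, Set.mem_singleton_iff] at hx ⊢
      by_contra! hlt
      exact hx (mul_le_regularizedMixture hα (by positivity) ((min_le_left _ _).trans
        (div_le_add_div_add_of_half_lt (by linarith) h.1 hL ENNReal.toReal_nonneg
          (by positivity) hlt)))
    · exact exp_neg_one_sub_log_two_div_two_mul_le hδ0 (by linarith) h.2
  · rw [not_and_or, not_lt, not_le] at h
    have h_univ : ∀ x : Fin n → Fin A,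
        α * min ((p a).toReal / (64 * log (1 / δ))) (1 / (2 * lam)) ≤
          regularizedMixture A n α lam #{t | x t = a} := fun x =>
      mul_le_regularizedMixture hα (by positivity)
        (min_le_add_div_add_of_le_or_lt (by positivity) (by linarith) (by linarith)
          (by positivity) hc h)
    refine le_trans (measureReal_mono (s₂ := ∅) fun x hx => hx (h_univ x)) ?_
    rw [measureReal_empty]
    exact hδ0.le

/-- Per-state core of Lemma B.2: with `X₁,…,X_n` i.i.d. from pmf `p` on `A` actions, counts
`N(a)`, and the regularized mixture `π̃(a) = (1−α)·N(a)/n + α·(N(a)+λ/A)/(n+λ)`, for each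
action `a`, with probability at least `1−δ`,
`π̃(a) ≥ α·min{p(a)/(64·log(1/δ)), 1/(2λ)}`. -/
theorem stmt11 (A : ℕ) (hA : 1 ≤ A) (p : PMF (Fin A)) (n : ℕ) (hn : 1 ≤ n)
    (α : ℝ) (hα : α ∈ Set.Icc (0 : ℝ) 1) (lam : ℝ) (hlam : (A : ℝ) ≤ lam)
    (δ : ℝ) (hδ : δ ∈ Set.Ioc (0 : ℝ) 0.9) :
    ∀ a : Fin A,
      ENNReal.ofReal (1 - δ) ≤
        Measure.pi (fun _ : Fin n => p.toMeasure)
          {x : Fin n → Fin A |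
            α * min ((p a).toReal / (64 * Real.log (1 / δ))) (1 / (2 * lam)) ≤
              (1 - α) * ((Finset.univ.filter fun t => x t = a).card : ℝ) / n +
                α * (((Finset.univ.filter fun t => x t = a).card : ℝ) + lam / A) /
                  (n + lam)} :=
  stmt11_general A hA p n α hα lam hlam δ hδ
end
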